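/- arXiv:1306.6502 — 4 statements merged into one kernel-verified Lean document; each statement's English description precedes it below -/
import Mathlib

section
/- Let a(t) = sin(log(log(e/t)))/(1 + log(log(e/t))) for t ∈ (0,1]. Then for every s with 0 < s < 1, the integral ∫₀ˢ |a'(t)| dt diverges (equals +∞). -/
open Real MeasureTheory Set

noncomputable def a (t : ℝ) : ℝ :=
  Real.sin (Real.log (Real.log (Real.exp 1 / t))) /
    (1 + Real.log (Real.log (Real.exp 1 / t)))

/-! Substituting `t = exp (1 - exp v)` turns `a` into `v ↦ sin v / (1 + v)`. Along the points
`v₀ + n π` with `|sin v₀| = 1`, which correspond to times `tₙ ↓ 0`, consecutive values differ by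
at least `1 / (1 + v₀ + n π)`. By the fundamental theorem of calculus `∫_{tₙ₊₁}^{tₙ} |a'|` bounds
that difference, so `∫₀ˢ |a'|` dominates a harmonic series. -/

open Filter Topology

section TotalVariation

variable {f : ℝ → ℝ}

theorem ofReal_abs_sub_le_lintegral_abs_deriv {c d : ℝ} (hcd : c ≤ d)
    (hf : ∀ t ∈ Icc c d, DifferentiableAt ℝ f t) :
    ENNReal.ofReal |f d - f c| ≤ ∫⁻ t in Ioo c d, ENNReal.ofReal |deriv f t| := by
  by_cases hfin : ∫⁻ t in Ioo c d, ENNReal.ofReal |deriv f t| = ⊤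
  · exact hfin ▸ le_top
  have hint : IntegrableOn (deriv f) (Ioo c d) := by
    refine ⟨(measurable_deriv f).aestronglyMeasurable, ?_⟩
    simpa only [HasFiniteIntegral, Real.enorm_eq_ofReal_abs] using lt_top_iff_ne_top.2 hfin
  have hftc : ∫ t in c..d, deriv f t = f d - f c :=
    intervalIntegral.integral_eq_sub_of_hasDerivAt
      (fun t ht => (hf t (uIcc_of_le hcd ▸ ht)).hasDerivAt)
      ((intervalIntegrable_iff_integrableOn_Ioo_of_le hcd).2 hint)
  calc ENNReal.ofReal |f d - f c|
      ≤ ENNReal.ofReal (∫ t in Ioo c d, |deriv f t|) := by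
        refine ENNReal.ofReal_le_ofReal ?_
        rw [← hftc, ← integral_Ioc_eq_integral_Ioo, ← intervalIntegral.integral_of_le hcd]
        exact intervalIntegral.abs_integral_le_integral_abs hcd
    _ = ∫⁻ t in Ioo c d, ENNReal.ofReal |deriv f t| :=
        ofReal_integral_eq_lintegral_ofReal hint.abs (.of_forall fun _ => abs_nonneg _)

theorem lintegral_abs_deriv_eq_top_of_tsum_eq_top {u v : ℝ} {x : ℕ → ℝ} (hx : Antitone x)
    (hxuv : ∀ n, x n ∈ Ioo u v) (hf : ∀ t ∈ Ioo u v, DifferentiableAt ℝ f t)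
    (hsum : ∑' n, ENNReal.ofReal |f (x n) - f (x (n + 1))| = ⊤) :
    ∫⁻ t in Ioo u v, ENNReal.ofReal |deriv f t| = ⊤ := by
  have hsub : ∀ n, Icc (x (n + 1)) (x n) ⊆ Ioo u v := fun n =>
    Icc_subset_Ioo (hxuv (n + 1)).1 (hxuv n).2
  refine eq_top_mono ?_ hsum
  calc ∑' n, ENNReal.ofReal |f (x n) - f (x (n + 1))|
      ≤ ∑' n, ∫⁻ t in Ioo (x (n + 1)) (x n), ENNReal.ofReal |deriv f t| :=
        ENNReal.tsum_le_tsum fun n =>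
          ofReal_abs_sub_le_lintegral_abs_deriv (hx n.le_succ) fun t ht => hf t (hsub n ht)
    _ = ∫⁻ t in ⋃ n, Ioo (x (n + 1)) (x n), ENNReal.ofReal |deriv f t| :=
        (lintegral_iUnion (fun _ => measurableSet_Ioo) hx.pairwise_disjoint_on_Ioo_succ _).symm
    _ ≤ ∫⁻ t in Ioo u v, ENNReal.ofReal |deriv f t| :=
        lintegral_mono_set (iUnion_subset fun n => Ioo_subset_Icc_self.trans (hsub n))

end TotalVariation

theorem tsum_ofReal_eq_top_of_not_summable {f : ℕ → ℝ} (hf0 : ∀ n, 0 ≤ f n)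
    (hf : ¬Summable f) : ∑' n, ENNReal.ofReal (f n) = ⊤ := by
  contrapose! hf
  simpa only [ENNReal.toReal_ofReal (hf0 _)] using ENNReal.summable_toReal hf

theorem not_summable_one_div_mul_add {c b : ℝ} (hc : 0 < c) (hb : 0 < b) :
    ¬Summable fun n : ℕ => 1 / (c * n + b) := by
  intro hsum
  set M := max c b
  have hle : ∀ n : ℕ, 1 / ((n + 1 : ℕ) : ℝ) ≤ M * (1 / (c * n + b)) := by
    intro n
    have : c * n + b ≤ M * ((n + 1 : ℕ) : ℝ) := by
      push_cast
      nlinarith [le_max_left c b, le_max_right c b, (n.cast_nonneg : (0 : ℝ) ≤ n)]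
    rw [mul_one_div, div_le_div_iff₀ (by positivity) (by positivity)]
    linarith
  exact Real.not_summable_one_div_natCast <| (summable_nat_add_iff 1).1 <|
    (hsum.mul_left M).of_nonneg_of_le (fun _ => by positivity) hle

theorem one_div_one_add_le_abs_sub_sin_div_add_pi {v : ℝ} (hv : 0 ≤ v) (hsin : |sin v| = 1) :
    1 / (1 + v) ≤ |sin v / (1 + v) - sin (v + π) / (1 + (v + π))| := by
  have hpos : 0 < 1 / (1 + v) + 1 / (1 + (v + π)) := by positivity
  have : sin v / (1 + v) - sin (v + π) / (1 + (v + π)) =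
      sin v * (1 / (1 + v) + 1 / (1 + (v + π))) := by
    rw [sin_add_pi]; ring
  rw [this, abs_mul, hsin, one_mul, abs_of_pos hpos]
  linarith [show 0 < 1 / (1 + (v + π)) by positivity]

theorem tsum_ofReal_abs_sub_sin_div_one_add_eq_top {v₀ : ℝ} (hv₀ : 0 ≤ v₀)
    (hsin : |sin v₀| = 1) :
    ∑' n : ℕ, ENNReal.ofReal |sin (v₀ + n * π) / (1 + (v₀ + n * π)) -
      sin (v₀ + (n + 1) * π) / (1 + (v₀ + (n + 1) * π))| = ⊤ := by
  refine eq_top_mono (ENNReal.tsum_le_tsum fun n => ENNReal.ofReal_le_ofReal ?_)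
    (tsum_ofReal_eq_top_of_not_summable (fun n => by positivity)
      (not_summable_one_div_mul_add pi_pos (by positivity : 0 < 1 + v₀)))
  have hsin_n : |sin (v₀ + n * π)| = 1 := by
    rw [sin_add_nat_mul_pi, abs_mul, abs_pow, abs_neg, abs_one, one_pow, one_mul, hsin]
  convert one_div_one_add_le_abs_sub_sin_div_add_pi (by positivity) hsin_n using 2 <;> ring_nf

theorem log_log_exp_one_div_exp_one_sub_exp (v : ℝ) :
    log (log (exp 1 / exp (1 - exp v))) = v := by
  rw [← exp_sub, sub_sub_cancel, log_exp, log_exp]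

theorem a_exp_one_sub_exp (v : ℝ) : a (exp (1 - exp v)) = sin v / (1 + v) := by
  rw [a, log_log_exp_one_div_exp_one_sub_exp]

theorem differentiableAt_a {t : ℝ} (ht : t ∈ Ioo 0 1) : DifferentiableAt ℝ a t := by
  have hlog : 1 < log (exp 1 / t) := by
    rw [log_div (exp_ne_zero 1) ht.1.ne', log_exp]
    linarith [log_neg ht.1 ht.2]
  have hloglog : 0 < log (log (exp 1 / t)) := log_pos hlog
  have hdiv : DifferentiableAt ℝ (fun t : ℝ => exp 1 / t) t :=
    (differentiableAt_const _).div differentiableAt_id ht.1.ne'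
  have hd : DifferentiableAt ℝ (fun t => log (log (exp 1 / t))) t :=
    (hdiv.log (div_pos (exp_pos 1) ht.1).ne').log (zero_lt_one.trans hlog).ne'
  exact hd.sin.div ((differentiableAt_const 1).add hd) (by linarith)

theorem tendsto_exp_one_sub_exp_atTop : Tendsto (fun v => exp (1 - exp v)) atTop (𝓝 0) := by
  refine tendsto_exp_atBot.comp ?_
  simpa only [sub_eq_add_neg, Function.comp_def] using
    tendsto_atBot_add_const_left _ 1 (tendsto_neg_atTop_atBot.comp tendsto_exp_atTop)

theorem stmt_0 (s : ℝ) (hs0 : 0 < s) (hs1 : s < 1) :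
    ∫⁻ t in Set.Ioo (0 : ℝ) s, ENNReal.ofReal |deriv a t| = ⊤ := by
  obtain ⟨V, hV⟩ :=
    (tendsto_exp_one_sub_exp_atTop.eventually (gt_mem_nhds hs0)).exists_forall_of_atTop
  obtain ⟨N, hN⟩ := exists_nat_ge (V / π)
  set v₀ : ℝ := N * π + π / 2
  have hv₀ : V ≤ v₀ := by
    have := (div_le_iff₀ pi_pos).1 hN
    simp only [v₀]
    linarith [pi_pos]
  have hsin : |sin v₀| = 1 := by
    rw [sin_add_pi_div_two, cos_nat_mul_pi, abs_pow, abs_neg, abs_one, one_pow]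
  set x : ℕ → ℝ := fun n => exp (1 - exp (v₀ + n * π))
  have hx : Antitone x := fun m n hmn => by
    simp only [x]
    gcongr
  have hxs : ∀ n, x n ∈ Ioo 0 s := fun n =>
    ⟨exp_pos _, hV _ (hv₀.trans (le_add_of_nonneg_right (by positivity)))⟩
  refine lintegral_abs_deriv_eq_top_of_tsum_eq_top hx hxs
    (fun t ht => differentiableAt_a ⟨ht.1, ht.2.trans hs1⟩) ?_
  simpa only [x, a_exp_one_sub_exp, Nat.cast_succ] using
    tsum_ofReal_abs_sub_sin_div_one_add_eq_top (by positivity) hsin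
end

section
/- Let a(t) = sin(log(log(e/t)))/(1 + log(log(e/t))) for t ∈ (0,1]. Then for every integer n ≥ 2, the integral ∫₀¹ |a'(t)|ⁿ t^(n-1) dt is finite. -/
open Real MeasureTheory Set

/-!
On `(0, 1]`, writing `L t = log (1 - log t) ≥ 0`, we have `a = g ∘ L` with
`g x = sin x / (1 + x)`, and `|g'| ≤ 2` on `[0, ∞)` while `|L' t| = 1 / (t (1 - log t))`.
Hence for `n ≥ 2` the integrand is at most `2ⁿ / (t (1 - log t)ⁿ) ≤ 2ⁿ / (t (1 - log t)²)`,
which is the derivative of `2ⁿ / (1 - log t)` and is therefore integrable on `(0, 1]`.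
-/

open Filter Topology

lemma log_exp_one_div {t : ℝ} (ht : t ≠ 0) : log (exp 1 / t) = 1 - log t := by
  rw [log_div (exp_ne_zero 1) ht, log_exp]

lemma hasDerivAt_sin_div_one_add {x : ℝ} (hx : 1 + x ≠ 0) :
    HasDerivAt (fun x => sin x / (1 + x)) ((cos x * (1 + x) - sin x) / (1 + x) ^ 2) x := by
  simpa only [mul_one] using (hasDerivAt_sin x).fun_div ((hasDerivAt_id' x).const_add 1) hx

lemma abs_cos_mul_one_add_sub_sin_div_sq_le {x : ℝ} (hx : 0 ≤ x) :
    |(cos x * (1 + x) - sin x) / (1 + x) ^ 2| ≤ 2 := by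
  have hx1 : 0 < 1 + x := by linarith
  have hnum : |cos x * (1 + x) - sin x| ≤ 2 * (1 + x) ^ 2 :=
    calc |cos x * (1 + x) - sin x| ≤ |cos x| * (1 + x) + |sin x| := by
          simpa only [abs_mul, abs_of_pos hx1] using abs_sub (cos x * (1 + x)) (sin x)
      _ ≤ 1 * (1 + x) + 1 := by
          gcongr
          exacts [abs_cos_le_one x, abs_sin_le_one x]
      _ ≤ 2 * (1 + x) ^ 2 := by nlinarith
  rwa [abs_div, abs_of_pos (pow_pos hx1 2), div_le_iff₀ (pow_pos hx1 2)]

lemma hasDerivAt_log_one_sub_log {t : ℝ} (ht : t ≠ 0) (hlog : 1 - log t ≠ 0) :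
    HasDerivAt (fun t => log (1 - log t)) (-(t * (1 - log t))⁻¹) t := by
  convert ((hasDerivAt_log ht).const_sub 1).log hlog using 1
  field_simp

lemma tendsto_inv_one_sub_log_nhdsGT_zero :
    Tendsto (fun t => (1 - log t)⁻¹) (𝓝[>] 0) (𝓝 0) := by
  refine Tendsto.inv_tendsto_atTop ?_
  simpa only [sub_eq_add_neg, Function.comp_apply] using
    tendsto_atTop_add_const_left _ 1 (tendsto_neg_atBot_atTop.comp tendsto_log_nhdsGT_zero)

lemma hasDerivAt_inv_one_sub_log {t : ℝ} (ht : t ≠ 0) (hlog : 1 - log t ≠ 0) :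
    HasDerivAt (fun t => (1 - log t)⁻¹) (t * (1 - log t) ^ 2)⁻¹ t :=
  (((hasDerivAt_log ht).const_sub 1).fun_inv hlog).congr_deriv (by field_simp)

lemma integrableOn_inv_mul_one_sub_log_sq :
    IntegrableOn (fun t => (t * (1 - log t) ^ 2)⁻¹) (Ioc 0 1) := by
  -- the antiderivative tends to `0` at `0⁺`, whereas `log 0 = 0` would give it the value `1` there
  set F := Function.update (fun t : ℝ => (1 - log t)⁻¹) 0 0
  have hs {t : ℝ} (ht0 : 0 < t) (ht1 : t ≤ 1) : 0 < 1 - log t := by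
    linarith [log_nonpos ht0.le ht1]
  have hF {t : ℝ} (ht0 : 0 < t) (ht1 : t ≤ 1) : HasDerivAt F (t * (1 - log t) ^ 2)⁻¹ t := by
    refine (hasDerivAt_inv_one_sub_log ht0.ne' (hs ht0 ht1).ne').congr_of_eventuallyEq ?_
    filter_upwards [eventually_ne_nhds ht0.ne'] with x hx using Function.update_of_ne hx _ _
  refine intervalIntegral.integrableOn_deriv_of_nonneg (g := F) (fun t ht => ?_)
    (fun t ht => hF ht.1 ht.2.le) (fun t ht => inv_nonneg.2 (mul_nonneg ht.1.le (sq_nonneg _)))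
  · rcases ht.1.eq_or_lt with rfl | ht0
    · refine continuousWithinAt_update_same.2 (tendsto_inv_one_sub_log_nhdsGT_zero.mono_left ?_)
      exact nhdsWithin_mono _ fun x hx => lt_of_le_of_ne hx.1.1 (Ne.symm hx.2)
    · exact (hF ht0 ht.2).continuousAt.continuousWithinAt

lemma abs_deriv_a_le {t : ℝ} (ht0 : 0 < t) (ht1 : t ≤ 1) :
    |deriv a t| ≤ 2 * (t * (1 - log t))⁻¹ := by
  have hs : 1 ≤ 1 - log t := by linarith [log_nonpos ht0.le ht1]
  have hs0 : 0 < 1 - log t := by linarith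
  set L := log (1 - log t)
  have hL : 0 ≤ L := log_nonneg hs
  have hcomp := (hasDerivAt_sin_div_one_add (x := L) (by positivity)).comp t
    (hasDerivAt_log_one_sub_log ht0.ne' hs0.ne')
  have ha : a =ᶠ[𝓝 t] (fun x => sin x / (1 + x)) ∘ fun t => log (1 - log t) := by
    filter_upwards [eventually_ne_nhds ht0.ne'] with x hx
    simp [a, log_exp_one_div hx]
  rw [(hcomp.congr_of_eventuallyEq ha).deriv, abs_mul, abs_neg,
    abs_of_pos (inv_pos.2 (mul_pos ht0 hs0))]
  gcongr
  exact abs_cos_mul_one_add_sub_sin_div_sq_le hL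

lemma abs_deriv_a_pow_mul_pow_le {n : ℕ} (hn : 2 ≤ n) {t : ℝ} (ht0 : 0 < t) (ht1 : t ≤ 1) :
    |deriv a t| ^ n * t ^ (n - 1) ≤ 2 ^ n * (t * (1 - log t) ^ 2)⁻¹ := by
  have hs : 1 ≤ 1 - log t := by linarith [log_nonpos ht0.le ht1]
  have hs0 : 0 < 1 - log t := by linarith
  obtain ⟨m, rfl⟩ : ∃ m, n = m + 2 := ⟨n - 2, by omega⟩
  calc |deriv a t| ^ (m + 2) * t ^ (m + 2 - 1)
      ≤ (2 * (t * (1 - log t))⁻¹) ^ (m + 2) * t ^ (m + 1) := by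
        rw [show m + 2 - 1 = m + 1 by omega]
        gcongr
        exact abs_deriv_a_le ht0 ht1
    _ = 2 ^ (m + 2) * (t * (1 - log t) ^ (m + 2))⁻¹ := by
        rw [mul_pow, inv_pow, mul_pow]
        field_simp
        ring
    _ ≤ 2 ^ (m + 2) * (t * (1 - log t) ^ 2)⁻¹ := by gcongr

theorem stmt_1 (n : ℕ) (hn : 2 ≤ n) :
    ∫⁻ t in Set.Ioo (0 : ℝ) 1,
      ENNReal.ofReal (|deriv a t| ^ n * t ^ (n - 1)) < ⊤ := by
  have hbound : IntegrableOn (fun t => 2 ^ n * (t * (1 - log t) ^ 2)⁻¹) (Ioo 0 1) :=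
    (integrableOn_inv_mul_one_sub_log_sq.mono_set Ioo_subset_Ioc_self).const_mul _
  calc ∫⁻ t in Ioo 0 1, ENNReal.ofReal (|deriv a t| ^ n * t ^ (n - 1))
      ≤ ∫⁻ t in Ioo 0 1, ENNReal.ofReal (2 ^ n * (t * (1 - log t) ^ 2)⁻¹) :=
        setLIntegral_mono' measurableSet_Ioo fun t ht =>
          ENNReal.ofReal_le_ofReal (abs_deriv_a_pow_mul_pow_le hn ht.1 ht.2.le)
    _ < ⊤ := hbound.setLIntegral_lt_top
end

section
/- Let X be a metric space, V a normed space, and f : X → V a function admitting an upper gradient g (meaning ‖f(γ(b)) − f(γ(a))‖ ≤ ∫_γ g for all rectifiable curves γ : [a,b] → X) such that f is constant on a closed set E ⊂ X. Then h = g·χ_{X\E} is also an upper gradient of f. -/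
/-!
Along a curve `γ : [a, b] → X` meeting `E`, let `a'` and `b'` be the first and last times in
`E`. Then `f (γ a') = f (γ b') = c`, so the increment of `f` over `[a, b]` is bounded by its
increments over `[a, a']` and `[b', b]`. These intervals meet `γ ⁻¹' E` only at endpoints,
so on them `g` and `g · χ_{X \ E}` have the same line integral.
-/

open Set MeasureTheory

/-- `g` is an upper gradient of `f` : for every rectifiable curve, parametrized by
arclength as a `1`-Lipschitz curve `γ : [a,b] → X`, the increment of `f` along the curve
is bounded by the line integral `∫_γ g`. -/
def IsUpperGradient {X V : Type*} [MetricSpace X] [NormedAddCommGroup V]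
    (f : X → V) (g : X → ℝ) : Prop :=
  ∀ (a b : ℝ), a ≤ b → ∀ γ : ℝ → X, LipschitzWith 1 γ →
    ‖f (γ b) - f (γ a)‖ ≤ ∫ t in a..b, g (γ t)

/-- Test against a constant curve. -/
theorem IsUpperGradient.nonneg {X V : Type*} [MetricSpace X] [NormedAddCommGroup V]
    {f : X → V} {g : X → ℝ} (hg : IsUpperGradient f g) (x : X) : 0 ≤ g x := by
  simpa using hg 0 1 zero_le_one (fun _ => x) (LipschitzWith.const' x)

theorem intervalIntegral_indicator_comp_eq {X : Type*} {g : X → ℝ} {s : Set X} {γ : ℝ → X}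
    {a b : ℝ} (hab : a ≤ b) (hγ : ∀ t ∈ Ioo a b, γ t ∈ s) :
    ∫ t in a..b, s.indicator g (γ t) = ∫ t in a..b, g (γ t) := by
  rw [intervalIntegral.integral_of_le hab, intervalIntegral.integral_of_le hab,
    integral_Ioc_eq_integral_Ioo, integral_Ioc_eq_integral_Ioo]
  exact setIntegral_congr_fun measurableSet_Ioo fun t ht => indicator_of_mem (hγ t ht) g

theorem intervalIntegral_add_intervalIntegral_le {φ : ℝ → ℝ} (hφ : ∀ t, 0 ≤ φ t)
    {a a' b' b : ℝ} (hφi : IntervalIntegrable φ volume a b)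
    (haa' : a ≤ a') (ha'b' : a' ≤ b') (hb'b : b' ≤ b) :
    (∫ t in a..a', φ t) + ∫ t in b'..b, φ t ≤ ∫ t in a..b, φ t := by
  have ha'b : a' ≤ b := ha'b'.trans hb'b
  have hsub : ∀ {c d}, a ≤ c → c ≤ d → d ≤ b → IntervalIntegrable φ volume c d :=
    fun hac hcd hdb => hφi.mono_set <| uIcc_subset_uIcc
      (mem_uIcc_of_le hac (hcd.trans hdb)) (mem_uIcc_of_le (hac.trans hcd) hdb)
  rw [← intervalIntegral.integral_add_adjacent_intervals (hsub le_rfl haa' ha'b)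
    (hsub haa' ha'b le_rfl)]
  have hlast : ∫ t in b'..b, φ t ≤ ∫ t in a'..b, φ t :=
    intervalIntegral.integral_mono_interval ha'b' hb'b le_rfl
      (Filter.Eventually.of_forall hφ) (hsub haa' ha'b le_rfl)
  linarith

theorem exists_first_last_mem_Icc {T : Set ℝ} (hT : IsClosed T) {a b : ℝ}
    (hne : (Icc a b ∩ T).Nonempty) :
    ∃ a' b', a ≤ a' ∧ a' ≤ b' ∧ b' ≤ b ∧ a' ∈ T ∧ b' ∈ T ∧
      (∀ t ∈ Ioo a a', t ∉ T) ∧ ∀ t ∈ Ioo b' b, t ∉ T := by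
  have hS : IsCompact (Icc a b ∩ T) := isCompact_Icc.inter_right hT
  obtain ⟨⟨haa', ha'b⟩, ha'T⟩ := hS.sInf_mem hne
  obtain ⟨⟨hab', hb'b⟩, hb'T⟩ := hS.sSup_mem hne
  refine ⟨_, _, haa', csInf_le_csSup hne hS.bddBelow hS.bddAbove, hb'b, ha'T, hb'T,
    fun t ht htT => ?_, fun t ht htT => ?_⟩
  · exact notMem_of_lt_csInf ht.2 hS.bddBelow ⟨⟨ht.1.le, ht.2.le.trans ha'b⟩, htT⟩
  · exact notMem_of_csSup_lt ht.1 hS.bddAbove ⟨⟨hab'.trans ht.1.le, ht.2.le⟩, htT⟩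

theorem stmt_14_general {X V : Type*} [MetricSpace X] [NormedAddCommGroup V]
    (f : X → V) (g : X → ℝ)
    (hg : IsUpperGradient f g)
    (E : Set X) (hE : IsClosed E) (c : V) (hf : ∀ x ∈ E, f x = c) :
    IsUpperGradient f (Set.indicator Eᶜ g) := by
  intro a b hab γ hγ
  have hind_nonneg : ∀ t, 0 ≤ Eᶜ.indicator g (γ t) := fun t =>
    indicator_nonneg (fun x _ => hg.nonneg x) _
  by_cases hint : IntervalIntegrable (fun t => g (γ t)) volume a b
  swap
  -- the junk value `0` of a non-integrable line integral already bounds the increment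
  · calc ‖f (γ b) - f (γ a)‖ ≤ ∫ t in a..b, g (γ t) := hg a b hab γ hγ
      _ = 0 := intervalIntegral.integral_undef hint
      _ ≤ _ := intervalIntegral.integral_nonneg hab fun t _ => hind_nonneg t
  rcases (Icc a b ∩ γ ⁻¹' E).eq_empty_or_nonempty with hS | hS
  · rw [intervalIntegral_indicator_comp_eq (s := Eᶜ) hab fun t ht htE =>
      hS.subset ⟨Ioo_subset_Icc_self ht, htE⟩]
    exact hg a b hab γ hγ
  obtain ⟨a', b', haa', ha'b', hb'b, ha'E, hb'E, hfirst, hlast⟩ :=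
    exists_first_last_mem_Icc (hE.preimage hγ.continuous) hS
  have hmeas : MeasurableSet (γ ⁻¹' Eᶜ) :=
    (hE.isOpen_compl.preimage hγ.continuous).measurableSet
  have hind_int : IntervalIntegrable (fun t => Eᶜ.indicator g (γ t)) volume a b :=
    ⟨hint.1.indicator hmeas, hint.2.indicator hmeas⟩
  calc ‖f (γ b) - f (γ a)‖ ≤ ‖f (γ b) - f (γ b')‖ + ‖f (γ a') - f (γ a)‖ := by
        simpa only [hf _ ha'E, hf _ hb'E] using
          norm_sub_le_norm_sub_add_norm_sub (f (γ b)) c (f (γ a))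
    _ ≤ (∫ t in b'..b, g (γ t)) + ∫ t in a..a', g (γ t) :=
        add_le_add (hg b' b hb'b γ hγ) (hg a a' haa' γ hγ)
    _ = (∫ t in a..a', Eᶜ.indicator g (γ t)) + ∫ t in b'..b, Eᶜ.indicator g (γ t) := by
        rw [intervalIntegral_indicator_comp_eq haa' hfirst,
          intervalIntegral_indicator_comp_eq hb'b hlast, add_comm]
    _ ≤ ∫ t in a..b, Eᶜ.indicator g (γ t) :=
        intervalIntegral_add_intervalIntegral_le hind_nonneg hind_int haa' ha'b' hb'b

theorem stmt_14 {X V : Type*} [MetricSpace X] [NormedAddCommGroup V]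
    (f : X → V) (g : X → ℝ) (hg0 : ∀ x, 0 ≤ g x)
    (hg : IsUpperGradient f g)
    (E : Set X) (hE : IsClosed E) (c : V) (hf : ∀ x ∈ E, f x = c) :
    IsUpperGradient f (Set.indicator Eᶜ g) :=
  stmt_14_general f g hg E hE c hf
end

section
/- Let a : [0,∞) → ℝ satisfy ∫₀ˢ |a'(t)| dt = ∞ for every s > 0 (with a differentiable on (0,1)). Let Γ = {(x, a(|x|)) : x ∈ Bⁿ(0,1)} ⊂ ℝ^{n+1} be the graph of a(|x|). Then the point P = (0, a(0)) cannot be joined to any other point of Γ by a curve of finite length lying in Γ. -/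
/-!
Along a curve `γ` in `Γ` from `P` to `Q`, the radial coordinate `r t = ‖(γ t).1‖` runs continuously
from `0` to `s = ‖Q.1‖ > 0`, and the height is `a (r t)`. Reparametrising by first hitting times of
`r` shows that the variation of `a` on `[0, s]` is at most the length of `γ`. A function of bounded
variation on `[0, s]` has integrable derivative there, which contradicts `∫₀ˢ |a'| = ∞`.
-/

open Set MeasureTheory

section HittingTime

variable {α β : Type*} [ConditionallyCompleteLinearOrder α] [TopologicalSpace α] [OrderTopology α]
  [DenselyOrdered α] [LinearOrder β] [TopologicalSpace β] [OrderClosedTopology β]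

theorem ContinuousOn.exists_monotoneOn_rightInvOn {r : α → β} {a b : α} (hab : a ≤ b)
    (hr : ContinuousOn r (Icc a b)) :
    ∃ T : β → α, MonotoneOn T (Icc (r a) (r b)) ∧ MapsTo T (Icc (r a) (r b)) (Icc a b) ∧
      RightInvOn T r (Icc (r a) (r b)) := by
  -- `T u = sInf (K u)` is the first time at which `r` takes the value `u`.
  set K : β → Set α := fun u ↦ Icc a b ∩ r ⁻¹' {u}
  have hK_compact (u : β) : IsCompact (K u) :=
    isCompact_Icc.of_isClosed_subset
      (hr.preimage_isClosed_of_isClosed isClosed_Icc isClosed_singleton) inter_subset_left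
  have hK_mem {u : β} (hu : u ∈ Icc (r a) (r b)) : sInf (K u) ∈ K u := by
    obtain ⟨t, ht, rfl⟩ := intermediate_value_Icc hab hr hu
    exact (hK_compact _).sInf_mem ⟨t, ht, rfl⟩
  refine ⟨fun u ↦ sInf (K u), fun u hu v hv huv ↦ ?_, fun u hu ↦ (hK_mem hu).1,
    fun u hu ↦ (hK_mem hu).2⟩
  obtain ⟨⟨hav, hvb⟩, hrv⟩ := hK_mem hv
  have hu' : u ∈ Icc (r a) (r (sInf (K v))) := ⟨hu.1, hrv.symm ▸ huv⟩
  obtain ⟨t, ht, rfl⟩ := intermediate_value_Icc hav (hr.mono (Icc_subset_Icc_right hvb)) hu'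
  exact (csInf_le (hK_compact _).bddBelow ⟨⟨ht.1, ht.2.trans hvb⟩, rfl⟩).trans ht.2

theorem eVariationOn_Icc_le_eVariationOn_comp {E : Type*} [PseudoEMetricSpace E] (f : β → E)
    {r : α → β} {a b : α} (hab : a ≤ b) (hr : ContinuousOn r (Icc a b)) :
    eVariationOn f (Icc (r a) (r b)) ≤ eVariationOn (f ∘ r) (Icc a b) := by
  obtain ⟨T, hT_mono, hT_maps, hT_inv⟩ := hr.exists_monotoneOn_rightInvOn hab
  calc eVariationOn f (Icc (r a) (r b))
      = eVariationOn ((f ∘ r) ∘ T) (Icc (r a) (r b)) :=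
        eVariationOn.eq_of_eqOn fun u hu ↦ by simp [hT_inv hu]
    _ ≤ eVariationOn (f ∘ r) (Icc a b) := eVariationOn.comp_le_of_monotoneOn _ T hT_mono hT_maps

end HittingTime

theorem BoundedVariationOn.lintegral_abs_deriv_ne_top {f : ℝ → ℝ} {c d : ℝ}
    (hf : BoundedVariationOn f (Icc c d)) :
    ∫⁻ t in Ioo c d, ENNReal.ofReal |deriv f t| ≠ ⊤ := by
  rcases lt_or_ge c d with hcd | hdc
  · rw [← uIcc_of_le hcd.le] at hf
    refine ne_top_of_le_ne_top hf.intervalIntegrable_deriv.1.hasFiniteIntegral.ne ?_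
    simp_rw [← Real.enorm_eq_ofReal_abs]
    exact lintegral_mono_set Ioo_subset_Ioc_self
  · simp [Ioo_eq_empty hdc.not_gt]

theorem eVariationOn_snd_comp_le {α E F : Type*} [LinearOrder α] [PseudoEMetricSpace E]
    [PseudoEMetricSpace F] (γ : α → E × F) (s : Set α) :
    eVariationOn (Prod.snd ∘ γ) s ≤ eVariationOn γ s := by
  simpa using LipschitzWith.prod_snd.lipschitzOnWith.comp_eVariationOn_le (mapsTo_univ γ s)

theorem stmt_19_general (n : ℕ) (a : ℝ → ℝ)
    (ha_int : ∀ s : ℝ, 0 < s → ∫⁻ t in Set.Ioo 0 s, ENNReal.ofReal |deriv a t| = ⊤)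
    (Γ : Set (EuclideanSpace ℝ (Fin n) × ℝ))
    (hΓ : Γ = {q | ∃ x ∈ Metric.ball (0 : EuclideanSpace ℝ (Fin n)) 1, q = (x, a ‖x‖)})
    (P : EuclideanSpace ℝ (Fin n) × ℝ) (hP : P = (0, a 0)) :
    ∀ Q ∈ Γ, Q ≠ P →
      ∀ γ : ℝ → EuclideanSpace ℝ (Fin n) × ℝ,
        ContinuousOn γ (Set.Icc 0 1) → (∀ t ∈ Set.Icc (0 : ℝ) 1, γ t ∈ Γ) →
        γ 0 = P → γ 1 = Q →
        eVariationOn γ (Set.Icc 0 1) = ⊤ := by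
  subst hΓ hP
  rintro Q ⟨x, -, rfl⟩ hxP γ hγ hγΓ hγ0 hγ1
  have hx : 0 < ‖x‖ := norm_pos_iff.2 fun hx ↦ hxP (by rw [hx, norm_zero])
  set r : ℝ → ℝ := fun t ↦ ‖(γ t).1‖
  have hr : ContinuousOn r (Icc 0 1) := (continuous_norm.comp continuous_fst).comp_continuousOn hγ
  have hγ_snd : EqOn (Prod.snd ∘ γ) (a ∘ r) (Icc 0 1) := fun t ht ↦ by
    obtain ⟨y, -, hy⟩ := hγΓ t ht
    simp [r, hy]
  have hvar : eVariationOn a (Icc 0 ‖x‖) ≤ eVariationOn γ (Icc 0 1) := calc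
    eVariationOn a (Icc 0 ‖x‖) = eVariationOn a (Icc (r 0) (r 1)) := by simp [r, hγ0, hγ1]
    _ ≤ eVariationOn (a ∘ r) (Icc 0 1) := eVariationOn_Icc_le_eVariationOn_comp a zero_le_one hr
    _ = eVariationOn (Prod.snd ∘ γ) (Icc 0 1) := eVariationOn.eq_of_eqOn hγ_snd.symm
    _ ≤ eVariationOn γ (Icc 0 1) := eVariationOn_snd_comp_le γ _
  by_contra hγ_bv
  exact BoundedVariationOn.lintegral_abs_deriv_ne_top (ne_top_of_le_ne_top hγ_bv hvar) (ha_int _ hx)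

theorem stmt_19 (n : ℕ) (a : ℝ → ℝ)
    (ha_diff : DifferentiableOn ℝ a (Set.Ioo 0 1))
    (ha_int : ∀ s : ℝ, 0 < s → ∫⁻ t in Set.Ioo 0 s, ENNReal.ofReal |deriv a t| = ⊤)
    (Γ : Set (EuclideanSpace ℝ (Fin n) × ℝ))
    (hΓ : Γ = {q | ∃ x ∈ Metric.ball (0 : EuclideanSpace ℝ (Fin n)) 1, q = (x, a ‖x‖)})
    (P : EuclideanSpace ℝ (Fin n) × ℝ) (hP : P = (0, a 0)) :
    ∀ Q ∈ Γ, Q ≠ P →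
      ∀ γ : ℝ → EuclideanSpace ℝ (Fin n) × ℝ,
        ContinuousOn γ (Set.Icc 0 1) → (∀ t ∈ Set.Icc (0 : ℝ) 1, γ t ∈ Γ) →
        γ 0 = P → γ 1 = Q →
        eVariationOn γ (Set.Icc 0 1) = ⊤ :=
  stmt_19_general n a ha_int Γ hΓ P hP
end
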